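/- A globally φ-symmetric Kenmotsu pseudo-metric manifold has constant sectional curvature −ε, i.e., R(X,Y)Z = −ε{g(Y,Z)X − g(X,Z)Y}. -/
import Mathlib


open scoped BigOperators

/-- An almost contact structure with a pseudo-Riemannian metric, *without* the
compatibility condition `g(φX,φY) = g(X,Y) - ε η(X) η(Y)`.  Here `C` plays the
role of the ring of smooth functions and `V` the `C`-module of vector fields. -/
structure PreACPM (C V : Type) [CommRing C] [Algebra ℝ C] [AddCommGroup V] [Module C V] where
  g : V → V → C
  g_symm : ∀ X Y, g X Y = g Y X
  g_add_left : ∀ X Y Z, g (X + Y) Z = g X Z + g Y Z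
  g_smul_left : ∀ (f : C) (X Y : V), g (f • X) Y = f * g X Y
  g_nondeg : ∀ X, (∀ Y, g X Y = 0) → X = 0
  φ : V → V
  φ_add : ∀ X Y, φ (X + Y) = φ X + φ Y
  φ_smul : ∀ (f : C) (X : V), φ (f • X) = f • φ X
  ξ : V
  η : V → C
  η_add : ∀ X Y, η (X + Y) = η X + η Y
  η_smul : ∀ (f : C) (X : V), η (f • X) = f * η X
  ε : ℝ
  hε : ε = 1 ∨ ε = -1
  φ_sq : ∀ X, φ (φ X) = -X + η X • ξ
  η_ξ : η ξ = 1
  φ_ξ : φ ξ = 0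
  η_φ : ∀ X, η (φ X) = 0

/-- An almost contact pseudo-metric manifold:
`g(φX,φY) = g(X,Y) - ε η(X) η(Y)`. -/
structure ACPM (C V : Type) [CommRing C] [Algebra ℝ C] [AddCommGroup V] [Module C V]
    extends PreACPM C V where
  compat : ∀ X Y, g (φ X) (φ Y) = g X Y - ε • (η X * η Y)

/-- A Kenmotsu pseudo-metric manifold: an almost contact pseudo-metric manifold
whose Levi-Civita connection `∇` satisfies `(∇_X φ)Y = -η(Y) φX - ε g(X,φY) ξ`.
`act X f` is the derivative of the function `f` along the vector field `X`,
`bracket` is the Lie bracket and `nabla` the Levi-Civita connection. -/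
structure Kenmotsu (C V : Type) [CommRing C] [Algebra ℝ C] [AddCommGroup V] [Module C V]
    extends ACPM C V where
  act : V → C → C
  act_add₁ : ∀ X Y f, act (X + Y) f = act X f + act Y f
  act_smul₁ : ∀ (f : C) (X : V) (h : C), act (f • X) h = f * act X h
  act_add : ∀ X f h, act X (f + h) = act X f + act X h
  act_mul : ∀ X f h, act X (f * h) = act X f * h + f * act X h
  act_const : ∀ (X : V) (s : ℝ), act X (algebraMap ℝ C s) = 0
  bracket : V → V → V
  bracket_antisymm : ∀ X Y, bracket X Y = -bracket Y X
  bracket_act : ∀ X Y f, act (bracket X Y) f = act X (act Y f) - act Y (act X f)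
  nabla : V → V → V
  nabla_add₁ : ∀ X Y Z, nabla (X + Y) Z = nabla X Z + nabla Y Z
  nabla_smul₁ : ∀ (f : C) (X Y : V), nabla (f • X) Y = f • nabla X Y
  nabla_add₂ : ∀ X Y Z, nabla X (Y + Z) = nabla X Y + nabla X Z
  nabla_leibniz : ∀ (X : V) (f : C) (Y : V), nabla X (f • Y) = act X f • Y + f • nabla X Y
  torsion_free : ∀ X Y, nabla X Y - nabla Y X = bracket X Y
  metric_compat : ∀ X Y Z, act X (g Y Z) = g (nabla X Y) Z + g Y (nabla X Z)
  kenmotsu : ∀ X Y, nabla X (φ Y) - φ (nabla X Y) = -(η Y • φ X) - (ε • g X (φ Y)) • ξ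

namespace Kenmotsu

variable {C V : Type} [CommRing C] [Algebra ℝ C] [AddCommGroup V] [Module C V]

/-- The Riemann curvature tensor `R(X,Y)Z = ∇_X ∇_Y Z - ∇_Y ∇_X Z - ∇_[X,Y] Z`. -/
def R (K : Kenmotsu C V) (X Y Z : V) : V :=
  K.nabla X (K.nabla Y Z) - K.nabla Y (K.nabla X Z) - K.nabla (K.bracket X Y) Z

/-- The covariant derivative `(∇_W R)(X,Y)Z` of the curvature tensor. -/
def covR (K : Kenmotsu C V) (W X Y Z : V) : V :=
  K.nabla W (K.R X Y Z) - K.R (K.nabla W X) Y Z - K.R X (K.nabla W Y) Z - K.R X Y (K.nabla W Z)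

/-- `(∇_X η)(Y)`. -/
def covEta (K : Kenmotsu C V) (X Y : V) : C :=
  K.act X (K.η Y) - K.η (K.nabla X Y)

/-- The Lie derivative `(£_W g)(X,Y)`. -/
def lieg (K : Kenmotsu C V) (W X Y : V) : C :=
  K.act W (K.g X Y) - K.g (K.bracket W X) Y - K.g X (K.bracket W Y)

/-- The Lie derivative `(£_W φ)(X)`. -/
def liephi (K : Kenmotsu C V) (W X : V) : V :=
  K.bracket W (K.φ X) - K.φ (K.bracket W X)

/-- The Lie derivative `(£_W η)(X)`. -/
def lieeta (K : Kenmotsu C V) (W X : V) : C :=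
  K.act W (K.η X) - K.η (K.bracket W X)

end Kenmotsu

/-- A `(2n+1)`-dimensional Kenmotsu pseudo-metric manifold together with a
pseudo-orthonormal frame, the Ricci tensor `Ric` (the trace of the curvature
with respect to the frame) and the Ricci operator `Q`. -/
structure KenmotsuRic (C V : Type) [CommRing C] [Algebra ℝ C] [AddCommGroup V] [Module C V]
    extends Kenmotsu C V where
  n : ℕ
  frame : Fin (2 * n + 1) → V
  sign : Fin (2 * n + 1) → ℝ
  sign_pm : ∀ i, sign i = 1 ∨ sign i = -1
  frame_orth : ∀ i j, g (frame i) (frame j) = if i = j then sign i • (1 : C) else 0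
  frame_span : ∀ X : V, X = ∑ i, (sign i • g X (frame i)) • frame i
  Ric : V → V → C
  hRic : ∀ X Y, Ric X Y = ∑ i, sign i • g (toKenmotsu.R (frame i) X Y) (frame i)
  Q : V → V
  hQ : ∀ X Y, g (Q X) Y = Ric X Y

namespace KenmotsuRic

variable {C V : Type} [CommRing C] [Algebra ℝ C] [AddCommGroup V] [Module C V]
  [Module ℝ V] [IsScalarTower ℝ C V]

/-- The scalar curvature `r`. -/
def r (K : KenmotsuRic C V) : C := ∑ i, K.sign i • K.Ric (K.frame i) (K.frame i)

/-- The Weyl conformal curvature tensor `C(X,Y)Z`. -/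
noncomputable def Weyl (K : KenmotsuRic C V) (X Y Z : V) : V :=
  K.toKenmotsu.R X Y Z
    - (2 * (K.n : ℝ) - 1)⁻¹ •
        (K.Ric Y Z • X + K.g Y Z • K.Q X - K.Ric X Z • Y - K.g X Z • K.Q Y)
    + (2 * (K.n : ℝ) * (2 * (K.n : ℝ) - 1))⁻¹ •
        ((K.r * K.g Y Z) • X - (K.r * K.g X Z) • Y)

/-- `(∇_X Q)(Y)`. -/
def covQ (K : KenmotsuRic C V) (X Y : V) : V :=
  K.nabla X (K.Q Y) - K.Q (K.nabla X Y)

/-- `M` is η-Einstein: `Ric = a g + b η⊗η` for functions `a`, `b`. -/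
def etaEinstein (K : KenmotsuRic C V) : Prop :=
  ∃ a b : C, ∀ X Y, K.Ric X Y = a * K.g X Y + b * (K.η X * K.η Y)

end KenmotsuRic

namespace KenmotsuAux

variable {C V : Type} [CommRing C] [Algebra ℝ C] [AddCommGroup V] [Module C V]
variable (K : Kenmotsu C V)

lemma smulC (r : ℝ) (x : C) : r • x = algebraMap ℝ C r * x := Algebra.smul_def r x

lemma he : algebraMap ℝ C K.ε * algebraMap ℝ C K.ε = 1 := by
  rw [← map_mul]
  rcases K.hε with h | h <;> rw [h] <;> norm_num

lemma half (x : C) (h : x + x = 0) : x = 0 := by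
  have : ((1:ℝ)/2) • ((2:ℝ) • x) = x := by
    rw [smul_smul]; norm_num
  rw [← this, two_smul, h, smul_zero]

-- zero/neg/sub lemmas
lemma phi_zero : K.φ 0 = 0 := by
  have := K.φ_smul 0 K.ξ; simpa using this

lemma phi_neg (X : V) : K.φ (-X) = -K.φ X := by
  have := K.φ_smul (-1) X; simpa using this

lemma phi_sub (X Y : V) : K.φ (X - Y) = K.φ X - K.φ Y := by
  rw [sub_eq_add_neg, K.φ_add, phi_neg, sub_eq_add_neg]

lemma eta_zero : K.η 0 = 0 := by
  have := K.η_smul 0 K.ξ; simpa using this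

lemma eta_neg (X : V) : K.η (-X) = -K.η X := by
  have := K.η_smul (-1) X; simpa using this

lemma eta_sub (X Y : V) : K.η (X - Y) = K.η X - K.η Y := by
  rw [sub_eq_add_neg, K.η_add, eta_neg, sub_eq_add_neg]

lemma g_zero_left (X : V) : K.g 0 X = 0 := by
  have := K.g_smul_left 0 K.ξ X; simpa using this

lemma g_zero_right (X : V) : K.g X 0 = 0 := by rw [K.g_symm, g_zero_left]

lemma g_add_right (X Y Z : V) : K.g X (Y + Z) = K.g X Y + K.g X Z := by
  rw [K.g_symm, K.g_add_left, K.g_symm Y X, K.g_symm Z X]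

lemma g_smul_right (f : C) (X Y : V) : K.g X (f • Y) = f * K.g X Y := by
  rw [K.g_symm, K.g_smul_left, K.g_symm]

lemma g_neg_left (X Y : V) : K.g (-X) Y = -K.g X Y := by
  have := K.g_smul_left (-1) X Y; simpa using this

lemma g_sub_left (X Y Z : V) : K.g (X - Y) Z = K.g X Z - K.g Y Z := by
  rw [sub_eq_add_neg, K.g_add_left, g_neg_left, sub_eq_add_neg]

lemma g_neg_right (X Y : V) : K.g X (-Y) = -K.g X Y := by
  rw [K.g_symm, g_neg_left, K.g_symm]

lemma g_sub_right (X Y Z : V) : K.g X (Y - Z) = K.g X Y - K.g X Z := by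
  rw [sub_eq_add_neg, g_add_right, g_neg_right, sub_eq_add_neg]

lemma act_zero (X : V) : K.act X 0 = 0 := by
  have := K.act_const X 0; simpa using this

lemma act_smulR (X : V) (r : ℝ) (f : C) : K.act X (r • f) = r • K.act X f := by
  rw [smulC, K.act_mul, K.act_const, smulC]; ring

lemma act_neg (X : V) (f : C) : K.act X (-f) = -K.act X f := by
  have h := K.act_mul X (-1) f
  have h1 : K.act X (-1 : C) = 0 := by
    have : (-1 : C) = algebraMap ℝ C (-1) := by norm_num
    rw [this, K.act_const]
  rw [h1] at h
  simpa using h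

lemma act_sub (X : V) (f g : C) : K.act X (f - g) = K.act X f - K.act X g := by
  rw [sub_eq_add_neg, K.act_add, act_neg, sub_eq_add_neg]

lemma nabla_zero (X : V) : K.nabla X 0 = 0 := by
  have := K.nabla_leibniz X 0 K.ξ
  simpa [act_zero] using this

lemma nabla_neg (X Y : V) : K.nabla X (-Y) = -K.nabla X Y := by
  have := K.nabla_leibniz X (-1) Y
  have h1 : K.act X (-1 : C) = 0 := by
    have : (-1 : C) = algebraMap ℝ C (-1) := by norm_num
    rw [this, K.act_const]
  simpa [h1] using this

lemma nabla_sub (X Y Z : V) : K.nabla X (Y - Z) = K.nabla X Y - K.nabla X Z := by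
  rw [sub_eq_add_neg, K.nabla_add₂, nabla_neg, sub_eq_add_neg]

lemma eps_eps (x : C) : K.ε • K.ε • x = x := by
  rw [smulC, smulC, ← mul_assoc, he, one_mul]

-- key lemmas
lemma g_xi (X : V) : K.g X K.ξ = K.ε • K.η X := by
  have h := K.compat X K.ξ
  rw [K.φ_ξ, g_zero_right, K.η_ξ, mul_one] at h
  exact sub_eq_zero.mp h.symm

lemma eta_g (X : V) : K.η X = K.ε • K.g X K.ξ := by
  rw [g_xi, eps_eps]

lemma g_xi_xi : K.g K.ξ K.ξ = K.ε • 1 := by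
  rw [g_xi, K.η_ξ]

lemma eta_nabla_xi (X : V) : K.η (K.nabla X K.ξ) = 0 := by
  have h0 : K.act X (K.g K.ξ K.ξ) = 0 := by
    rw [g_xi_xi, smulC, mul_one, K.act_const]
  rw [K.metric_compat] at h0
  rw [K.g_symm K.ξ (K.nabla X K.ξ), g_xi] at h0
  have h1 : K.ε • K.η (K.nabla X K.ξ) = 0 := half _ h0
  calc K.η (K.nabla X K.ξ) = K.ε • K.ε • K.η (K.nabla X K.ξ) := (eps_eps K _).symm
  _ = 0 := by rw [h1, smul_zero]

lemma phi_nabla_xi (X : V) : K.φ (K.nabla X K.ξ) = K.φ X := by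
  have h := K.kenmotsu X K.ξ
  rw [K.φ_ξ, nabla_zero, g_zero_right, K.η_ξ, one_smul, smul_zero, zero_smul] at h
  rw [zero_sub, sub_zero] at h
  exact neg_injective h

lemma nabla_xi (X : V) : K.nabla X K.ξ = X - K.η X • K.ξ := by
  have h1 := K.φ_sq (K.nabla X K.ξ)
  rw [phi_nabla_xi, K.φ_sq X, eta_nabla_xi, zero_smul, add_zero] at h1
  apply neg_injective
  rw [← h1]; abel

lemma act_eta (X Y : V) :
    K.act X (K.η Y) = K.η (K.nabla X Y) + K.ε • K.g X Y - K.η X * K.η Y := by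
  have h := K.metric_compat X Y K.ξ
  rw [nabla_xi, g_sub_right, g_smul_right, g_xi K Y, act_smulR, g_xi K (K.nabla X Y),
    K.g_symm Y X] at h
  simp only [smulC] at h ⊢
  linear_combination (algebraMap ℝ C K.ε) * h
    - (K.act X (K.η Y) - K.η (K.nabla X Y) + K.η X * K.η Y) * he K

lemma eta_nabla (X Y : V) :
    K.η (K.nabla X Y) = K.act X (K.η Y) - K.ε • K.g X Y + K.η X * K.η Y := by
  have h := act_eta K X Y
  simp only [smulC] at h ⊢
  linear_combination -h

lemma R_xi (X Y : V) : K.R X Y K.ξ = K.η X • Y - K.η Y • X := by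
  simp only [Kenmotsu.R, nabla_xi, nabla_sub, K.nabla_leibniz, act_eta, ← K.torsion_free,
    eta_sub, K.g_symm Y X, smulC]
  module

lemma eta_R (X Y W : V) :
    K.η (K.R X Y W) = K.η Y * (K.ε • K.g X W) - K.η X * (K.ε • K.g Y W) := by
  simp only [Kenmotsu.R, eta_sub, eta_nabla]
  rw [K.bracket_act]
  simp only [← K.torsion_free, g_sub_left, eta_sub, act_sub, K.act_add, act_smulR,
    K.act_mul, K.metric_compat, eta_nabla]
  simp only [smulC]
  try rw [K.g_symm Y X]
  ring

lemma R_smul₃ (X Y : V) (f : C) (Z : V) : K.R X Y (f • Z) = f • K.R X Y Z := by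
  simp only [Kenmotsu.R, K.nabla_leibniz, K.nabla_add₂, K.bracket_act]
  module

lemma R_sub₃ (X Y Z W : V) : K.R X Y (Z - W) = K.R X Y Z - K.R X Y W := by
  simp only [Kenmotsu.R, nabla_sub]
  abel

lemma covR_xi (W X Y : V) :
    K.covR W X Y K.ξ =
      (K.ε • K.g W X) • Y - (K.ε • K.g W Y) • X - K.R X Y W := by
  simp only [Kenmotsu.covR, nabla_xi, R_sub₃, R_smul₃, R_xi, nabla_sub, K.nabla_leibniz,
    act_eta, smulC]
  module

end KenmotsuAux

open KenmotsuAux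

/-- A globally φ-symmetric Kenmotsu pseudo-metric manifold
(`φ²((∇_W R)(X,Y)Z) = 0` for all `W,X,Y,Z`) has constant sectional curvature
`-ε`, i.e. `R(X,Y)Z = -ε{g(Y,Z)X - g(X,Z)Y}`. -/


theorem globally_phi_symmetric {C V : Type} [CommRing C] [Algebra ℝ C] [AddCommGroup V]
    [Module C V] (K : Kenmotsu C V)
    (h : ∀ W X Y Z, K.φ (K.φ (K.covR W X Y Z)) = 0) :
    ∀ X Y Z, K.R X Y Z = -((K.ε • K.g Y Z) • X - (K.ε • K.g X Z) • Y) := by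
  intro X Y Z
  have h2 := K.φ_sq (K.covR Z X Y K.ξ)
  rw [h Z X Y K.ξ] at h2
  have hη : K.η (K.covR Z X Y K.ξ) = 0 := by
    rw [covR_xi, eta_sub, eta_sub, K.η_smul, K.η_smul, eta_R, K.g_symm Z X, K.g_symm Z Y]
    simp only [smulC]
    ring
  rw [hη, zero_smul, add_zero] at h2
  have h3 : K.covR Z X Y K.ξ = 0 := neg_eq_zero.mp h2.symm
  have h4 := covR_xi K Z X Y
  rw [h3, K.g_symm Z X, K.g_symm Z Y] at h4
  have h5 : K.R X Y Z = (K.ε • K.g X Z) • Y - (K.ε • K.g Y Z) • X :=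
    (sub_eq_zero.mp h4.symm).symm
  rw [h5]; abel
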